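/- arXiv:1002.2710 — 2 statements merged into one kernel-verified Lean document; each statement's English description precedes it below -/
import Mathlib

section
/- Let e₁, ..., e_N be an orthonormal basis of ℝ^N, and let the D-type roots be the vectors ±eᵢ ± eⱼ with i ≠ j. Suppose v is a D-type root and w₁, w₂, w₃ are three pairwise orthogonal D-type roots such that |⟨v, wₗ⟩| = 1 for each l = 1, 2, 3. Then, up to replacing some wₗ by its negative, two of the roots w₁, w₂, w₃ are of the form eⱼ + e_k and eⱼ - e_k for some indices j ≠ k. -/
/-!
Write `v = s eᵢ + t eⱼ`. A root `w` with `|⟪v, w⟫| = 1` shares exactly one index with `v`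
(sharing both gives `⟪v, w⟫ ∈ {0, ±2}`, sharing none gives `0`), so `w = ρ e_p + δ e_q` with
`p ∈ {i, j}` and `q ∉ {i, j}`. By pigeonhole two of `w₁, w₂, w₃` have the same `p`, and then
`0 = ⟪w_l, w_l'⟫ = ρρ' + δδ' [q = q']` forces `q = q'` and `ρδ = -ρ'δ'`. Multiplying each root
by its `e_p`-coefficient turns the pair into `e_p + e_q` and `e_p - e_q`.
-/

/-- A D-type root in ℝ^N: a vector of the form ±eᵢ ± eⱼ with i ≠ j. -/
def IsDRoot (N : ℕ) (v : EuclideanSpace ℝ (Fin N)) : Prop :=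
  ∃ i j : Fin N, i ≠ j ∧ ∃ s t : ℝ, (s = 1 ∨ s = -1) ∧ (t = 1 ∨ t = -1) ∧
    v = s • EuclideanSpace.single i (1 : ℝ) + t • EuclideanSpace.single j (1 : ℝ)

lemma abs_add_ne_one_of_mul_self_eq_one {x y : ℝ} (hx : x * x = 1) (hy : y * y = 1) :
    |x + y| ≠ 1 := by
  intro h
  have hsq : (x + y) * (x + y) = 1 := by rw [← abs_mul_abs_self, h, one_mul]
  nlinarith

section

variable {N : ℕ}

noncomputable def dRoot (i j : Fin N) (s t : ℝ) : EuclideanSpace ℝ (Fin N) :=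
  s • EuclideanSpace.single i 1 + t • EuclideanSpace.single j 1

lemma dRoot_comm (i j : Fin N) (s t : ℝ) : dRoot i j s t = dRoot j i t s :=
  add_comm _ _

lemma isDRoot_iff_exists_dRoot {v : EuclideanSpace ℝ (Fin N)} :
    IsDRoot N v ↔ ∃ i j, i ≠ j ∧ ∃ s t : ℝ, s * s = 1 ∧ t * t = 1 ∧ v = dRoot i j s t := by
  simp only [IsDRoot, dRoot, mul_self_eq_one_iff]

lemma inner_dRoot_dRoot (i j a b : Fin N) (s t σ τ : ℝ) :
    inner ℝ (dRoot i j s t) (dRoot a b σ τ) =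
      s * σ * (if i = a then 1 else 0) + s * τ * (if i = b then 1 else 0)
      + t * σ * (if j = a then 1 else 0) + t * τ * (if j = b then 1 else 0) := by
  simp only [dRoot, inner_add_left, inner_add_right, real_inner_smul_left, real_inner_smul_right,
    EuclideanSpace.inner_single_left, PiLp.single_apply, map_one, one_mul]
  ring

lemma smul_dRoot_of_mul_self_eq_one (p q : Fin N) {ρ : ℝ} (δ : ℝ) (hρ : ρ * ρ = 1) :
    ρ • dRoot p q ρ δ = EuclideanSpace.single p 1 + (ρ * δ) • EuclideanSpace.single q 1 := by
  rw [dRoot, smul_add, smul_smul, smul_smul, hρ, one_smul]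

lemma IsDRoot.exists_dRoot_of_abs_inner_eq_one {i j : Fin N} {s t : ℝ}
    (hs : s * s = 1) (ht : t * t = 1) {w : EuclideanSpace ℝ (Fin N)} (hw : IsDRoot N w)
    (h : |inner ℝ (dRoot i j s t) w| = 1) :
    ∃ p q ρ δ, (p = i ∨ p = j) ∧ q ≠ i ∧ q ≠ j ∧ ρ * ρ = 1 ∧ δ * δ = 1 ∧
      w = dRoot p q ρ δ := by
  obtain ⟨a, b, hab, σ, τ, hσ, hτ, rfl⟩ := isDRoot_iff_exists_dRoot.1 hw
  rw [inner_dRoot_dRoot] at h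
  have hsσ := abs_add_ne_one_of_mul_self_eq_one (x := s * σ) (y := t * τ)
    (by linear_combination σ * σ * hs + hσ) (by linear_combination τ * τ * ht + hτ)
  have hsτ := abs_add_ne_one_of_mul_self_eq_one (x := s * τ) (y := t * σ)
    (by linear_combination τ * τ * hs + hτ) (by linear_combination σ * σ * ht + hσ)
  have hba := hab.symm
  by_cases ha : a = i ∨ a = j
  · refine ⟨a, b, σ, τ, ha, ?_, ?_, hσ, hτ, rfl⟩ <;> rintro rfl <;> rcases ha with rfl | rfl <;>
      simp_all
  by_cases hb : b = i ∨ b = j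
  · refine ⟨b, a, τ, σ, hb, ?_, ?_, hτ, hσ, dRoot_comm ..⟩ <;> rintro rfl <;> simp_all
  · push Not at ha hb
    simp [ha.1.symm, ha.2.symm, hb.1.symm, hb.2.symm] at h

lemma eq_and_mul_eq_neg_of_inner_dRoot_eq_zero {p q₁ q₂ : Fin N} {ρ₁ δ₁ ρ₂ δ₂ : ℝ}
    (hρ₁ : ρ₁ * ρ₁ = 1) (hδ₁ : δ₁ * δ₁ = 1) (hρ₂ : ρ₂ * ρ₂ = 1)
    (hq₁ : q₁ ≠ p) (hq₂ : q₂ ≠ p)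
    (h : inner ℝ (dRoot p q₁ ρ₁ δ₁) (dRoot p q₂ ρ₂ δ₂) = 0) :
    q₁ = q₂ ∧ ρ₁ * δ₁ = -(ρ₂ * δ₂) := by
  rw [inner_dRoot_dRoot, if_pos rfl, if_neg hq₂.symm, if_neg hq₁] at h
  by_cases hq : q₁ = q₂
  · rw [if_pos hq] at h
    exact ⟨hq, by linear_combination ρ₂ * δ₁ * h - ρ₁ * δ₁ * hρ₂ - ρ₂ * δ₂ * hδ₁⟩
  · rw [if_neg hq] at h
    have h10 : (1 : ℝ) = 0 := by linear_combination ρ₁ * ρ₂ * h - hρ₁ - ρ₁ * ρ₁ * hρ₂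
    exact absurd h10 one_ne_zero

lemma smul_dRoot_eq_add_and_smul_dRoot_eq_sub {p q : Fin N} {ρ₁ δ₁ ρ₂ δ₂ : ℝ}
    (hρ₁ : ρ₁ * ρ₁ = 1) (hδ₁ : δ₁ * δ₁ = 1) (hρ₂ : ρ₂ * ρ₂ = 1) (h : ρ₁ * δ₁ = -(ρ₂ * δ₂)) :
    (ρ₁ • dRoot p q ρ₁ δ₁ = EuclideanSpace.single p 1 + EuclideanSpace.single q 1 ∧
      ρ₂ • dRoot p q ρ₂ δ₂ = EuclideanSpace.single p 1 - EuclideanSpace.single q 1) ∨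
    (ρ₂ • dRoot p q ρ₂ δ₂ = EuclideanSpace.single p 1 + EuclideanSpace.single q 1 ∧
      ρ₁ • dRoot p q ρ₁ δ₁ = EuclideanSpace.single p 1 - EuclideanSpace.single q 1) := by
  have hsq : ρ₁ * δ₁ * (ρ₁ * δ₁) = 1 := by linear_combination δ₁ * δ₁ * hρ₁ + hδ₁
  have h₂ : ρ₂ * δ₂ = -(ρ₁ * δ₁) := by linear_combination h
  simp only [smul_dRoot_of_mul_self_eq_one _ _ _ hρ₁, smul_dRoot_of_mul_self_eq_one _ _ _ hρ₂, h₂]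
  rcases mul_self_eq_one_iff.1 hsq with h₁ | h₁ <;> simp [h₁, sub_eq_add_neg]

end

/-- If a D-type root v has inner product ±1 with three pairwise orthogonal
D-type roots w₁,w₂,w₃, then, up to sign, two of them are e_j + e_k and e_j - e_k. -/
theorem stmt9 (N : ℕ) (v : EuclideanSpace ℝ (Fin N))
    (w : Fin 3 → EuclideanSpace ℝ (Fin N))
    (hv : IsDRoot N v) (hw : ∀ l, IsDRoot N (w l))
    (horth : ∀ l l', l ≠ l' → (inner ℝ (w l) (w l') : ℝ) = 0)
    (hin : ∀ l, |(inner ℝ (v) (w l) : ℝ)| = 1) :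
    ∃ j k : Fin N, j ≠ k ∧ ∃ l₁ l₂ : Fin 3, l₁ ≠ l₂ ∧ ∃ s₁ s₂ : ℝ,
      (s₁ = 1 ∨ s₁ = -1) ∧ (s₂ = 1 ∨ s₂ = -1) ∧
      s₁ • w l₁ = EuclideanSpace.single j (1 : ℝ) + EuclideanSpace.single k (1 : ℝ) ∧
      s₂ • w l₂ = EuclideanSpace.single j (1 : ℝ) - EuclideanSpace.single k (1 : ℝ) := by
  obtain ⟨i, j, -, s, t, hs, ht, rfl⟩ := isDRoot_iff_exists_dRoot.1 hv
  choose p q ρ δ hp hqi hqj hρ hδ hwe using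
    fun l => (hw l).exists_dRoot_of_abs_inner_eq_one hs ht (hin l)
  obtain ⟨l₁, -, l₂, -, hne, hpp⟩ := Finset.exists_ne_map_eq_of_card_lt_of_maps_to
    (s := Finset.univ) (t := {i, j}) (Finset.card_le_two.trans_lt (by simp)) (f := p)
    (by simpa using hp)
  have hqp : ∀ l l', q l ≠ p l' := fun l l' => by
    rcases hp l' with h | h <;> rw [h] <;> [exact hqi l; exact hqj l]
  have hw₂ : w l₂ = dRoot (p l₁) (q l₂) (ρ l₂) (δ l₂) := by rw [hwe, hpp]
  obtain ⟨hqq, hsign⟩ := eq_and_mul_eq_neg_of_inner_dRoot_eq_zero (hρ l₁) (hδ l₁) (hρ l₂)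
    (hqp l₁ l₁) (hpp ▸ hqp l₂ l₂) (by rw [← hwe, ← hw₂]; exact horth l₁ l₂ hne)
  rw [← hqq] at hw₂
  have hpq : p l₁ ≠ q l₁ := (hqp l₁ l₁).symm
  rcases smul_dRoot_eq_add_and_smul_dRoot_eq_sub (hρ l₁) (hδ l₁) (hρ l₂) hsign with h | h <;>
    rw [← hwe l₁, ← hw₂] at h
  · exact ⟨_, _, hpq, l₁, l₂, hne, _, _, mul_self_eq_one_iff.1 (hρ l₁),
      mul_self_eq_one_iff.1 (hρ l₂), h⟩
  · exact ⟨_, _, hpq, l₂, l₁, hne.symm, _, _, mul_self_eq_one_iff.1 (hρ l₂),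
      mul_self_eq_one_iff.1 (hρ l₁), h⟩
end

section
/- Let e₁, ..., e_N be an orthonormal basis of ℝ^N and consider the A-type roots eᵢ - eⱼ for i ≠ j. Then for any fixed A-type root v, there do not exist three pairwise orthogonal A-type roots w₁, w₂, w₃ with |⟨v, wₗ⟩| = 1 for all l = 1, 2, 3. -/
/-- An A-type root in ℝ^N: a vector of the form eᵢ - eⱼ with i ≠ j. -/
def IsARoot (N : ℕ) (v : EuclideanSpace ℝ (Fin N)) : Prop :=
  ∃ i j : Fin N, i ≠ j ∧
    v = EuclideanSpace.single i (1 : ℝ) - EuclideanSpace.single j (1 : ℝ)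

/-!
Pairing with `eᵢ - eⱼ` reads off `w i - w j`, and a root `e_c - e_d` has coordinates
`1, -1` at `c, d` and `0` elsewhere. So `|⟨eᵢ - eⱼ, w⟩| = 1` says that the root `w` involves
exactly one of the indices `i`, `j`. By pigeonhole two of the three roots `w_l` involve the
same index, and two roots with a common index are never orthogonal.
-/

open EuclideanSpace

variable {N : ℕ}

lemma inner_single_sub_single_left (i j : Fin N) (w : EuclideanSpace ℝ (Fin N)) :
    inner ℝ (single i (1 : ℝ) - single j 1) w = w i - w j := by
  simp [inner_sub_left, inner_single_left]

namespace IsARoot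

lemma inner_ne_zero_of_apply_ne_zero {w w' : EuclideanSpace ℝ (Fin N)} (hw : IsARoot N w)
    (hw' : IsARoot N w') {a : Fin N} (ha : w a ≠ 0) (ha' : w' a ≠ 0) :
    inner ℝ w w' ≠ 0 := by
  obtain ⟨c, d, hcd, rfl⟩ := hw
  obtain ⟨c', d', hcd', rfl⟩ := hw'
  simp only [inner_single_sub_single_left, PiLp.sub_apply, PiLp.single_apply] at ha ha' ⊢
  split_ifs at ha ha' ⊢ <;> simp_all <;> norm_num

lemma apply_ne_zero_iff_of_abs_inner_eq_one {w : EuclideanSpace ℝ (Fin N)} (hw : IsARoot N w)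
    {i j : Fin N} (h : |inner ℝ (single i (1 : ℝ) - single j 1) w| = 1) :
    w i ≠ 0 ↔ w j = 0 := by
  obtain ⟨c, d, hcd, rfl⟩ := hw
  simp only [inner_single_sub_single_left, PiLp.sub_apply, PiLp.single_apply] at h ⊢
  split_ifs at h ⊢ <;> simp_all <;> norm_num at h

end IsARoot

/-- No A-type root has inner product ±1 with three pairwise orthogonal A-type roots. -/
theorem stmt12 (N : ℕ) (v : EuclideanSpace ℝ (Fin N)) (hv : IsARoot N v) :
    ¬ ∃ w : Fin 3 → EuclideanSpace ℝ (Fin N),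
      (∀ l, IsARoot N (w l)) ∧ (∀ l l', l ≠ l' → (inner ℝ (w l) (w l') : ℝ) = 0) ∧
      (∀ l, |(inner ℝ (v) (w l) : ℝ)| = 1) := by
  rintro ⟨w, hroot, horth, hnorm⟩
  obtain ⟨i, j, -, rfl⟩ := hv
  have hexactly l := (hroot l).apply_ne_zero_iff_of_abs_inner_eq_one (hnorm l)
  obtain ⟨l, l', hne, hsame⟩ :=
    Fintype.exists_ne_map_eq_of_card_lt (fun l ↦ w l i = 0 : Fin 3 → Prop) (by simp)
  suffices ∃ a, w l a ≠ 0 ∧ w l' a ≠ 0 by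
    obtain ⟨a, ha, ha'⟩ := this
    exact (hroot l).inner_ne_zero_of_apply_ne_zero (hroot l') ha ha' (horth l l' hne)
  by_cases hi : w l i = 0
  · have hi' : w l' i = 0 := hsame ▸ hi
    exact ⟨j, fun hj ↦ (hexactly l).mpr hj hi, fun hj ↦ (hexactly l').mpr hj hi'⟩
  · exact ⟨i, hi, fun hi' ↦ hi (hsame ▸ hi')⟩
end
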